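/- Let n, W > 0, set Q = W²/n, and let k be an integer with 0 ≤ k ≤ n/W. In the Euclidean plane ℝ², let v = (n, k·W)/√(n² + k²·W²) be the unit vector in the direction (n, kW), let c = (n/2, (k+1)·W/2), and let p = c − (n/2)·v. Then for every point u = (0, y) with 0 ≤ y ≤ W one has (3k² − 8k)·Q/16 ≤ ⟨p − u, v⟩ ≤ (k² + 2k)·Q/4. Equivalently, writing u⊥ for the orthogonal projection of u onto the line through p perpendicular to v, (3k² − 8k)·Q/16 ≤ ⟨u⊥ − u, v⟩ ≤ (k² + 2k)·Q/4. -/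

import Mathlib

/-!
Write `s = √(n² + k²W²)` and `t = kW ≤ n`. As `v` is a unit vector,
`⟪p - u, v⟫ = ⟪c - u, v⟫ - n/2 = (s - n)/2 + t(W - 2y)/(2s)`. The first term equals
`t²/(2(s + n))`, which lies between `3t²/(16n)` and `t²/(4n)` because `n ≤ s ≤ √2 n ≤ 5n/3`;
the second has absolute value at most `tW/(2n) = kW²/(2n)` because `|W - 2y| ≤ W`.
-/

open scoped RealInnerProductSpace

/-- The point `(a, b)` of the Euclidean plane `ℝ²`. -/
noncomputable def pt2 (a b : ℝ) : EuclideanSpace ℝ (Fin 2) :=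
  (WithLp.equiv 2 (Fin 2 → ℝ)).symm ![a, b]

lemma inner_pt2 (a b c d : ℝ) : ⟪pt2 a b, pt2 c d⟫ = a * c + b * d := by
  simp [pt2, EuclideanSpace.inner_eq_star_dotProduct, Fin.sum_univ_two, dotProduct]
  ring

lemma norm_pt2 (a b : ℝ) : ‖pt2 a b‖ = √(a ^ 2 + b ^ 2) := by
  simp [EuclideanSpace.norm_eq, pt2, Fin.sum_univ_two]

lemma real_inner_sub_smul_sub_of_norm_eq_one {E : Type*} [NormedAddCommGroup E]
    [InnerProductSpace ℝ E] {v : E} (hv : ‖v‖ = 1) (c u : E) (r : ℝ) :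
    ⟪c - r • v - u, v⟫ = ⟪c - u, v⟫ - r := by
  rw [sub_right_comm, inner_sub_left, real_inner_smul_left, real_inner_self_eq_norm_sq, hv]
  ring

lemma inner_pt2_sub_smul_sub_pt2 {n t h y s : ℝ} (hs0 : 0 < s) (hs : s ^ 2 = n ^ 2 + t ^ 2) :
    ⟪pt2 (n / 2) h - (n / 2) • (s⁻¹ • pt2 n t) - pt2 0 y, s⁻¹ • pt2 n t⟫ =
      (s - n) / 2 + t * (2 * h - t - 2 * y) / (2 * s) := by
  have hv : ‖s⁻¹ • pt2 n t‖ = 1 := by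
    rw [norm_smul, norm_pt2, ← hs, Real.sqrt_sq hs0.le, norm_inv, Real.norm_of_nonneg hs0.le,
      inv_mul_cancel₀ hs0.ne']
  rw [real_inner_sub_smul_sub_of_norm_eq_one hv, inner_sub_left, real_inner_smul_right,
    real_inner_smul_right, inner_pt2, inner_pt2]
  field_simp
  linear_combination -hs

lemma sqrt_sq_add_le {n a : ℝ} (hn : 0 < n) (ha : 0 ≤ a) : √(n ^ 2 + a) ≤ n + a / (2 * n) := by
  rw [Real.sqrt_le_iff]
  refine ⟨by positivity, ?_⟩
  have : (n + a / (2 * n)) ^ 2 = n ^ 2 + a + (a / (2 * n)) ^ 2 := by field_simp; ring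
  nlinarith [sq_nonneg (a / (2 * n))]

lemma le_sqrt_sq_add {n a : ℝ} (hn : 0 < n) (ha : 0 ≤ a) (han : a ≤ n ^ 2) :
    n + 3 * a / (8 * n) ≤ √(n ^ 2 + a) := by
  rw [Real.le_sqrt' (by positivity)]
  have : (n + 3 * a / (8 * n)) ^ 2 = n ^ 2 + a - a * (16 * n ^ 2 - 9 * a) / (64 * n ^ 2) := by
    field_simp; ring
  have : 0 ≤ a * (16 * n ^ 2 - 9 * a) / (64 * n ^ 2) :=
    div_nonneg (mul_nonneg ha (by linarith)) (by positivity)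
  linarith

lemma abs_mul_sub_two_mul_div_le {t W y n s : ℝ} (ht : 0 ≤ t) (hy0 : 0 ≤ y) (hyW : y ≤ W)
    (hn : 0 < n) (hns : n ≤ s) : |t * (W - 2 * y) / (2 * s)| ≤ t * W / (2 * n) := by
  rw [abs_div, abs_mul, abs_of_nonneg ht, abs_of_pos (by linarith : 0 < 2 * s)]
  have hW : |W - 2 * y| ≤ W := abs_le.mpr ⟨by linarith, by linarith⟩
  have : 0 ≤ t * W := mul_nonneg ht (hy0.trans hyW)
  gcongr

theorem statement15 (n W : ℝ) (hn : 0 < n) (hW : 0 < W) (k : ℕ) (hk : (k : ℝ) ≤ n / W)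
    (y : ℝ) (hy0 : 0 ≤ y) (hyW : y ≤ W) :
    (3 * (k : ℝ) ^ 2 - 8 * k) * (W ^ 2 / n) / 16 ≤
        ⟪(pt2 (n / 2) (((k : ℝ) + 1) * W / 2) -
            (n / 2) • ((Real.sqrt (n ^ 2 + (k : ℝ) ^ 2 * W ^ 2))⁻¹ • pt2 n ((k : ℝ) * W))) -
            pt2 0 y,
          (Real.sqrt (n ^ 2 + (k : ℝ) ^ 2 * W ^ 2))⁻¹ • pt2 n ((k : ℝ) * W)⟫ ∧
      ⟪(pt2 (n / 2) (((k : ℝ) + 1) * W / 2) -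
            (n / 2) • ((Real.sqrt (n ^ 2 + (k : ℝ) ^ 2 * W ^ 2))⁻¹ • pt2 n ((k : ℝ) * W))) -
            pt2 0 y,
          (Real.sqrt (n ^ 2 + (k : ℝ) ^ 2 * W ^ 2))⁻¹ • pt2 n ((k : ℝ) * W)⟫ ≤
        ((k : ℝ) ^ 2 + 2 * k) * (W ^ 2 / n) / 4 := by
  set K : ℝ := (k : ℝ)
  have hK : 0 ≤ K := Nat.cast_nonneg k
  have hKW2 : (K * W) ^ 2 ≤ n ^ 2 := pow_le_pow_left₀ (by positivity) ((le_div_iff₀ hW).mp hk) 2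
  rw [← mul_pow]
  have hns : n ≤ √(n ^ 2 + (K * W) ^ 2) := Real.le_sqrt_of_sq_le (by nlinarith)
  rw [inner_pt2_sub_smul_sub_pt2 (hn.trans_le hns) (Real.sq_sqrt (by positivity)),
    show 2 * ((K + 1) * W / 2) - K * W - 2 * y = W - 2 * y by ring]
  have hlow := le_sqrt_sq_add hn (sq_nonneg (K * W)) hKW2
  have hup := sqrt_sq_add_le hn (sq_nonneg (K * W))
  obtain ⟨hoff_low, hoff_up⟩ :=
    abs_le.mp (abs_mul_sub_two_mul_div_le (mul_nonneg hK hW.le) hy0 hyW hn hns)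
  have hlower : (3 * K ^ 2 - 8 * K) * (W ^ 2 / n) / 16 =
      3 * (K * W) ^ 2 / (8 * n) / 2 - K * W * W / (2 * n) := by ring
  have hupper : (K ^ 2 + 2 * K) * (W ^ 2 / n) / 4 =
      (K * W) ^ 2 / (2 * n) / 2 + K * W * W / (2 * n) := by ring
  constructor <;> linarith
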